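/- Let t, x, s ∈ ℂ with Im(t) > 0, Re(x) > 0, Im(x) < 0, and Re(s) > 0. Then the function u ↦ u^(s−1) e^(2πi(t−u)x) / (1 − e^(2πi(t−u))) is integrable on (0, ∞), and L(t,x,s) = (2π)^s e^(iπ(s/2 − 2tx)) · (1/Γ(s)) ∫_0^∞ u^(s−1) e^(2πi(t−u)x) / (1 − e^(2πi(t−u))) du, where (2π)^s is defined by the principal branch. -/

import Mathlib

/-!
For `Im t > 0` the ratio `e^{2πi(t-u)}` has modulus `e^{-2π Im t} < 1`, so the integrand is the
geometric series `∑ₘ e^{2πit(x+m)} u^{s-1} e^{-2πi(x+m)u}`. Since `Im x < 0`, the rate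
`a = 2πi(x+m)` has `Re a = -2π Im x > 0`, and Euler's integral
`∫₀^∞ u^{s-1} e^{-au} du = Γ(s) a^{-s}` (known for real `a > 0`, hence for `Re a > 0` by the
identity theorem) evaluates each term. As `Im (x+m) < 0`, the principal branches satisfy
`(2πi(x+m))^{-s} = (2π)^{-s} e^{-iπs/2} (x+m)^{-s}`, which turns the termwise integrals into the
Lerch series. The norms of the terms integrate to a geometric series in `e^{-2π Im t}`, which
justifies exchanging sum and integral.
-/

open MeasureTheory

/-- The Lerch zeta function, defined by its (absolutely convergent, for `Im t > 0` and
`Re x > 0`) series, with all complex powers taken with the principal branch. -/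
noncomputable def lerchZeta (t x s : ℂ) : ℂ :=
  ∑' m : ℕ, ((m : ℂ) + x) ^ (-s) * Complex.exp (2 * Real.pi * Complex.I * t * m)

open Set Filter Complex
open scoped Real Topology

namespace Complex

theorem mul_cpow_of_arg_add_mem_Ioc {x y : ℂ} (hx : x ≠ 0) (hy : y ≠ 0)
    (h : x.arg + y.arg ∈ Ioc (-π) π) (w : ℂ) : (x * y) ^ w = x ^ w * y ^ w := by
  rw [cpow_def_of_ne_zero (mul_ne_zero hx hy), cpow_def_of_ne_zero hx, cpow_def_of_ne_zero hy,
    log_mul hx hy h, add_mul, exp_add]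

theorem two_pi_I_mul_cpow {z : ℂ} (hz : z.im < 0) (w : ℂ) :
    (2 * π * I * z) ^ w = (2 * π) ^ w * exp (π / 2 * I * w) * z ^ w := by
  have hz0 : z ≠ 0 := fun h => by simp [h] at hz
  have hπ : (2 * π : ℂ) = ((2 * π : ℝ) : ℂ) := by push_cast; ring
  have hπ0 : (2 * π : ℂ) ≠ 0 := by rw [hπ]; exact ofReal_ne_zero.2 Real.two_pi_pos.ne'
  have harg2π : (2 * π : ℂ).arg = 0 := by rw [hπ]; exact arg_ofReal_of_nonneg Real.two_pi_pos.le
  have harg : (2 * π * I : ℂ).arg = π / 2 := by rw [hπ, arg_real_mul _ Real.two_pi_pos, arg_I]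
  rw [mul_cpow_of_arg_add_mem_Ioc (mul_ne_zero hπ0 I_ne_zero) hz0,
    mul_cpow_of_arg_add_mem_Ioc hπ0 I_ne_zero, cpow_def_of_ne_zero I_ne_zero, log_I]
  · rw [harg2π, arg_I]; constructor <;> linarith [Real.pi_pos]
  · rw [harg]; constructor <;> linarith [neg_pi_lt_arg z, arg_neg_iff.2 hz]

end Complex

section GammaIntegral

theorem norm_cpow_mul_cexp_neg_mul {u : ℝ} (hu : 0 < u) (w a : ℂ) :
    ‖(u : ℂ) ^ w * cexp (-(a * u))‖ = u ^ w.re * Real.exp (-a.re * u) := by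
  rw [norm_mul, norm_exp, norm_cpow_eq_rpow_re_of_pos hu]
  simp

theorem continuousOn_cpow_mul_cexp_neg_mul (w a : ℂ) :
    ContinuousOn (fun u : ℝ => (u : ℂ) ^ w * cexp (-(a * u))) (Ioi 0) :=
  fun u hu => ((continuousAt_ofReal_cpow_const u w (Or.inr hu.ne')).mul
    (by fun_prop)).continuousWithinAt

variable {s : ℂ}

theorem integrableOn_cpow_mul_cexp_neg_mul (hs : 0 < s.re) {a : ℂ} (ha : 0 < a.re) :
    IntegrableOn (fun u : ℝ => (u : ℂ) ^ (s - 1) * cexp (-(a * u))) (Ioi 0) := by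
  refine (integrableOn_rpow_mul_exp_neg_mul_rpow (s := s.re - 1) (p := 1)
      (by linarith) one_pos ha).mono'
    ((continuousOn_cpow_mul_cexp_neg_mul _ _).aestronglyMeasurable measurableSet_Ioi) ?_
  filter_upwards [ae_restrict_mem measurableSet_Ioi] with u hu
  rw [norm_cpow_mul_cexp_neg_mul hu]
  simp

/-- The exponent `s + 1 - 1` matches `integrableOn_cpow_mul_cexp_neg_mul` at `s + 1`. -/
theorem hasDerivAt_cpow_mul_cexp_neg_mul {u : ℝ} (hu : u ≠ 0) (z : ℂ) :
    HasDerivAt (fun z : ℂ => (u : ℂ) ^ (s - 1) * cexp (-(z * u)))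
      (-((u : ℂ) ^ (s + 1 - 1) * cexp (-(z * u)))) z := by
  refine ((((hasDerivAt_id z).mul_const (u : ℂ)).neg.cexp).const_mul
    ((u : ℂ) ^ (s - 1))).congr_deriv ?_
  rw [show s + 1 - 1 = s - 1 + 1 by ring, cpow_add _ _ (ofReal_ne_zero.2 hu), cpow_one]
  simp only [id, one_mul, Pi.neg_apply]
  ring

theorem differentiableOn_integral_cpow_mul_cexp_neg_mul (hs : 0 < s.re) :
    DifferentiableOn ℂ (fun a : ℂ => ∫ u in Ioi (0 : ℝ), (u : ℂ) ^ (s - 1) * cexp (-(a * u)))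
      {a | 0 < a.re} := by
  intro a ha
  have hε : 0 < a.re / 2 := half_pos ha
  have hball : ∀ z ∈ Metric.ball a (a.re / 2), a.re / 2 < z.re := by
    intro z hz
    have := (abs_re_le_norm (z - a)).trans_lt (mem_ball_iff_norm.1 hz)
    rw [sub_re] at this
    linarith [(abs_lt.1 this).1]
  have hbound : ∀ u : ℝ, 0 < u → ∀ z ∈ Metric.ball a (a.re / 2),
      ‖-((u : ℂ) ^ (s + 1 - 1) * cexp (-(z * u)))‖
        ≤ ‖(u : ℂ) ^ (s + 1 - 1) * cexp (-(((a.re / 2 : ℝ) : ℂ) * u))‖ := by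
    intro u hu z hz
    rw [norm_neg, norm_cpow_mul_cexp_neg_mul hu, norm_cpow_mul_cexp_neg_mul hu, ofReal_re]
    gcongr
    exact (hball z hz).le
  have hs' : 0 < (s + 1).re := by rw [add_re, one_re]; linarith
  refine (hasDerivAt_integral_of_dominated_loc_of_deriv_le
    (F' := fun z u => -((u : ℂ) ^ (s + 1 - 1) * cexp (-(z * u)))) (Metric.ball_mem_nhds a hε)
    (Eventually.of_forall fun z =>
      (continuousOn_cpow_mul_cexp_neg_mul _ z).aestronglyMeasurable measurableSet_Ioi)
    (integrableOn_cpow_mul_cexp_neg_mul hs ha)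
    ((continuousOn_cpow_mul_cexp_neg_mul _ a).neg.aestronglyMeasurable measurableSet_Ioi)
    ?_ (integrableOn_cpow_mul_cexp_neg_mul hs' (a := ((a.re / 2 : ℝ) : ℂ)) (by simpa using hε)).norm
    ?_).2.differentiableAt.differentiableWithinAt
  · filter_upwards [ae_restrict_mem measurableSet_Ioi] with u hu
    exact hbound u hu
  · filter_upwards [ae_restrict_mem measurableSet_Ioi] with u hu
    exact fun z _ => hasDerivAt_cpow_mul_cexp_neg_mul hu.ne' z

theorem frequently_ofReal_pos_nhdsNE_one : ∃ᶠ z in 𝓝[≠] (1 : ℂ), ∃ r : ℝ, 0 < r ∧ z = (r : ℂ) := by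
  have h : Tendsto ((↑) : ℝ → ℂ) (𝓝[≠] 1) (𝓝[≠] (1 : ℂ)) :=
    tendsto_nhdsWithin_of_tendsto_nhds_of_eventually_within _
      ((continuous_ofReal.tendsto' 1 1 ofReal_one).mono_left nhdsWithin_le_nhds)
      (eventually_nhdsWithin_of_forall fun r hr => by simpa using hr)
  exact h.frequently ((eventually_nhdsWithin_of_eventually_nhds (lt_mem_nhds one_pos)).mono
    fun r (hr : 0 < r) => ⟨r, hr, rfl⟩).frequently

theorem integral_cpow_mul_cexp_neg_mul_Ioi {a : ℂ} (hs : 0 < s.re) (ha : 0 < a.re) :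
    ∫ u in Ioi (0 : ℝ), (u : ℂ) ^ (s - 1) * cexp (-(a * u)) = Gamma s * a ^ (-s) := by
  have hU : IsOpen {z : ℂ | 0 < z.re} := isOpen_lt continuous_const continuous_re
  have hg : DifferentiableOn ℂ (fun z : ℂ => Gamma s * z ^ (-s)) {z | 0 < z.re} := fun z hz =>
    ((differentiableAt_id.cpow_const (.inl hz)).const_mul _).differentiableWithinAt
  refine (differentiableOn_integral_cpow_mul_cexp_neg_mul hs).analyticOnNhd hU
    |>.eqOn_of_preconnected_of_frequently_eq (hg.analyticOnNhd hU)
      (convex_halfSpace_re_gt 0).isPreconnected (by simp : (1 : ℂ) ∈ {z : ℂ | 0 < z.re})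
      (frequently_ofReal_pos_nhdsNE_one.mono ?_) ha
  rintro _ ⟨r, hr, rfl⟩
  rw [integral_cpow_mul_exp_neg_mul_Ioi hs hr, one_div,
    inv_cpow _ _ (by simp [arg_ofReal_of_nonneg hr.le, Real.pi_ne_zero.symm]), ← cpow_neg, mul_comm]

end GammaIntegral

section Lerch

variable {t x s : ℂ}

theorem re_two_pi_I_mul (z : ℂ) : (2 * π * I * z).re = -(2 * π * z.im) := by
  simp

theorem re_two_pi_I_mul_pos {z : ℂ} (hz : z.im < 0) : 0 < (2 * π * I * z).re := by
  rw [re_two_pi_I_mul]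
  nlinarith [Real.pi_pos]

theorem norm_cexp_two_pi_I_mul (z : ℂ) : ‖cexp (2 * π * I * z)‖ = Real.exp (-(2 * π * z.im)) := by
  rw [norm_exp, re_two_pi_I_mul]

theorem norm_cexp_two_pi_I_mul_sub_ofReal (t : ℂ) (u : ℝ) :
    ‖cexp (2 * π * I * (t - u))‖ = Real.exp (-(2 * π * t.im)) := by
  rw [norm_cexp_two_pi_I_mul, sub_im, ofReal_im, sub_zero]

theorem hasSum_lerch_integrand (ht : 0 < t.im) (u : ℝ) :
    HasSum (fun m : ℕ => cexp (2 * π * I * t * (x + m)) *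
        ((u : ℂ) ^ (s - 1) * cexp (-(2 * π * I * (x + m) * u))))
      ((u : ℂ) ^ (s - 1) * cexp (2 * π * I * (t - u) * x) / (1 - cexp (2 * π * I * (t - u)))) := by
  have hq : ‖cexp (2 * π * I * (t - u))‖ < 1 := by
    rw [norm_cexp_two_pi_I_mul_sub_ofReal, Real.exp_lt_one_iff, neg_lt_zero]
    positivity
  rw [div_eq_mul_inv]
  have hterm : ∀ m : ℕ, (u : ℂ) ^ (s - 1) * cexp (2 * π * I * (t - u) * x) *
      cexp (2 * π * I * (t - u)) ^ m
      = cexp (2 * π * I * t * (x + m)) *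
          ((u : ℂ) ^ (s - 1) * cexp (-(2 * π * I * (x + m) * u))) := by
    intro m
    rw [← exp_nat_mul, mul_assoc, ← exp_add, mul_left_comm (cexp _), ← exp_add]
    ring_nf
  simpa only [hterm] using (hasSum_geometric_of_norm_lt_one hq).mul_left
    ((u : ℂ) ^ (s - 1) * cexp (2 * π * I * (t - u) * x))

theorem integral_lerch_term (hx : x.im < 0) (hs : 0 < s.re) (m : ℕ) :
    ∫ u in Ioi (0 : ℝ), cexp (2 * π * I * t * (x + m)) *
        ((u : ℂ) ^ (s - 1) * cexp (-(2 * π * I * (x + m) * u)))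
      = Gamma s * (2 * π) ^ (-s) * cexp (-(I * π * (s / 2 - 2 * t * x))) *
        (((m : ℂ) + x) ^ (-s) * cexp (2 * π * I * t * m)) := by
  have him : (x + m).im < 0 := by simpa using hx
  rw [integral_const_mul, integral_cpow_mul_cexp_neg_mul_Ioi hs (re_two_pi_I_mul_pos him),
    two_pi_I_mul_cpow him, mul_add, exp_add, add_comm x,
    show -(I * π * (s / 2 - 2 * t * x)) = π / 2 * I * -s + 2 * π * I * t * x by ring, exp_add]
  ring

theorem summable_integral_norm_lerch_term (ht : 0 < t.im) :
    Summable fun m : ℕ => ∫ u in Ioi (0 : ℝ), ‖cexp (2 * π * I * t * (x + m)) *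
        ((u : ℂ) ^ (s - 1) * cexp (-(2 * π * I * (x + m) * u)))‖ := by
  have hnorm : ∀ (m : ℕ) (u : ℝ), ‖cexp (2 * π * I * t * (x + m)) *
        ((u : ℂ) ^ (s - 1) * cexp (-(2 * π * I * (x + m) * u)))‖
      = ‖cexp (2 * π * I * t * x)‖ * ‖cexp (2 * π * I * t)‖ ^ m *
        ‖(u : ℂ) ^ (s - 1) * cexp (-(2 * π * I * x * u))‖ := by
    intro m u
    simp only [norm_mul, norm_exp, ← Real.exp_nat_mul]
    rw [mul_left_comm, ← Real.exp_add, ← Real.exp_add, mul_left_comm, ← Real.exp_add]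
    congr 2
    simp only [mul_re, mul_im, add_re, add_im, neg_re, ofReal_re, ofReal_im, I_re, I_im,
      natCast_re, natCast_im, re_ofNat, im_ofNat]
    ring
  have hr : ‖cexp (2 * π * I * t)‖ < 1 := by
    rw [norm_cexp_two_pi_I_mul, Real.exp_lt_one_iff, neg_lt_zero]
    positivity
  simp only [hnorm, integral_const_mul]
  exact ((summable_geometric_of_lt_one (norm_nonneg _) hr).mul_left _).mul_right _

theorem integrableOn_lerch_integrand (ht : 0 < t.im) (hx : x.im < 0) (hs : 0 < s.re) :
    IntegrableOn (fun u : ℝ => (u : ℂ) ^ (s - 1) * cexp (2 * π * I * (t - u) * x) /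
      (1 - cexp (2 * π * I * (t - u)))) (Ioi 0) := by
  set r := Real.exp (-(2 * π * t.im))
  have hr : r < 1 := by rw [Real.exp_lt_one_iff, neg_lt_zero]; positivity
  have hden : ∀ u : ℝ, 1 - r ≤ ‖1 - cexp (2 * π * I * (t - u))‖ := fun u => by
    simpa [norm_cexp_two_pi_I_mul_sub_ofReal] using
      norm_sub_norm_le (1 : ℂ) (cexp (2 * π * I * (t - u)))
  have hden0 : ∀ u : ℝ, 1 - cexp (2 * π * I * (t - u)) ≠ 0 := fun u =>
    norm_pos_iff.1 ((sub_pos.2 hr).trans_le (hden u))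
  refine IntegrableOn.congr_fun (Integrable.bdd_mul
    (integrableOn_cpow_mul_cexp_neg_mul hs (re_two_pi_I_mul_pos hx))
    (c := ‖cexp (2 * π * I * t * x)‖ / (1 - r)) (f := fun u : ℝ =>
      cexp (2 * π * I * t * x) / (1 - cexp (2 * π * I * (t - u)))) ?_ ?_) ?_ measurableSet_Ioi
  · exact (Continuous.continuousOn (by fun_prop) |>.div (by fun_prop) fun u _ => hden0 u)
      |>.aestronglyMeasurable measurableSet_Ioi
  · refine Eventually.of_forall fun u => ?_
    rw [norm_div]
    gcongr
    exact hden u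
  · intro u _
    dsimp only
    rw [div_mul_eq_mul_div, mul_left_comm, ← exp_add]
    ring_nf

theorem integral_lerch_integrand (ht : 0 < t.im) (hx : x.im < 0) (hs : 0 < s.re) :
    ∫ u in Ioi (0 : ℝ), (u : ℂ) ^ (s - 1) * cexp (2 * π * I * (t - u) * x) /
        (1 - cexp (2 * π * I * (t - u)))
      = Gamma s * (2 * π) ^ (-s) * cexp (-(I * π * (s / 2 - 2 * t * x))) * lerchZeta t x s := by
  have hint : ∀ m : ℕ, IntegrableOn (fun u : ℝ => cexp (2 * π * I * t * (x + m)) *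
      ((u : ℂ) ^ (s - 1) * cexp (-(2 * π * I * (x + m) * u)))) (Ioi 0) := fun m =>
    (integrableOn_cpow_mul_cexp_neg_mul hs (re_two_pi_I_mul_pos (by simpa using hx))).const_mul _
  calc _ = ∫ u in Ioi (0 : ℝ), ∑' m : ℕ, cexp (2 * π * I * t * (x + m)) *
        ((u : ℂ) ^ (s - 1) * cexp (-(2 * π * I * (x + m) * u))) :=
        setIntegral_congr_fun measurableSet_Ioi fun u _ =>
          (hasSum_lerch_integrand ht u).tsum_eq.symm
    _ = ∑' m : ℕ, ∫ u in Ioi (0 : ℝ), cexp (2 * π * I * t * (x + m)) *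
        ((u : ℂ) ^ (s - 1) * cexp (-(2 * π * I * (x + m) * u))) :=
        (integral_tsum_of_summable_integral_norm hint (summable_integral_norm_lerch_term ht)).symm
    _ = _ := by
        rw [tsum_congr (integral_lerch_term hx hs), tsum_mul_left, lerchZeta]

end Lerch

theorem lerch_eq_rl_fracint_general (t x s : ℂ) (ht : 0 < t.im)
    (hx' : x.im < 0) (hs : 0 < s.re) :
    IntegrableOn
      (fun u : ℝ => (u : ℂ) ^ (s - 1) *
        Complex.exp (2 * Real.pi * Complex.I * (t - u) * x) /
          (1 - Complex.exp (2 * Real.pi * Complex.I * (t - u))))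
      (Set.Ioi 0) ∧
    lerchZeta t x s
      = (2 * Real.pi : ℂ) ^ s * Complex.exp (Complex.I * Real.pi * (s / 2 - 2 * t * x)) *
        ((1 / Complex.Gamma s) *
          ∫ u in Set.Ioi (0 : ℝ),
            (u : ℂ) ^ (s - 1) * Complex.exp (2 * Real.pi * Complex.I * (t - u) * x) /
              (1 - Complex.exp (2 * Real.pi * Complex.I * (t - u)))) := by
  refine ⟨integrableOn_lerch_integrand ht hx' hs, ?_⟩
  rw [integral_lerch_integrand ht hx' hs]
  have hΓ : Gamma s ≠ 0 := Gamma_ne_zero_of_re_pos hs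
  have h2π : (2 * π : ℂ) ^ s ≠ 0 := cpow_ne_zero_iff.2 (.inl (by simp [Real.pi_ne_zero]))
  rw [cpow_neg, exp_neg]
  field_simp

theorem lerch_eq_rl_fracint (t x s : ℂ) (ht : 0 < t.im) (hx : 0 < x.re)
    (hx' : x.im < 0) (hs : 0 < s.re) :
    IntegrableOn
      (fun u : ℝ => (u : ℂ) ^ (s - 1) *
        Complex.exp (2 * Real.pi * Complex.I * (t - u) * x) /
          (1 - Complex.exp (2 * Real.pi * Complex.I * (t - u))))
      (Set.Ioi 0) ∧
    lerchZeta t x s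
      = (2 * Real.pi : ℂ) ^ s * Complex.exp (Complex.I * Real.pi * (s / 2 - 2 * t * x)) *
        ((1 / Complex.Gamma s) *
          ∫ u in Set.Ioi (0 : ℝ),
            (u : ℂ) ^ (s - 1) * Complex.exp (2 * Real.pi * Complex.I * (t - u) * x) /
              (1 - Complex.exp (2 * Real.pi * Complex.I * (t - u)))) :=
  lerch_eq_rl_fracint_general t x s ht hx' hs
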